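/- arXiv:2603.09537 — 3 statements merged into one kernel-verified Lean document; each statement's English description precedes it below -/
import Mathlib

section
/- Let A be an associative unital ℂ-algebra and q ∈ ℂ with q ≠ 0 and q² ≠ 1. Suppose E, F₁, F₂, K, K′ ∈ A satisfy: K·K′ = K′·K = 1, K·F₁ = q⁻²·F₁·K, K·F₂ = q·F₂·K, E·F₁ − F₁·E = (K − K′)/(q − q⁻¹), and E·F₂ = F₂·E. Then K′·E·(q·F₁F₂ − F₂F₁) − q·(q·F₁F₂ − F₂F₁)·K′·E = F₂. -/
/-!
Put `X = q F₁F₂ - F₂F₁`. Since `K` scales `F₁` by `q⁻²` and `F₂` by `q`, it scales `X` by `q⁻¹`,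
so `K'X = q XK'`. Since `E` commutes with `F₂`, `[E, X] = q [E, F₁] F₂ - F₂ [E, F₁]`, and inserting
`[E, F₁] = (K - K')/(q - q⁻¹)` the `K'` terms cancel while the `K` terms give `(q - q⁻¹) K F₂`,
so `[E, X] = K F₂`. Hence `K'EX = K'XE + K'KF₂ = q XK'E + F₂`.
-/

section QCommutator

variable {R A : Type*} [CommSemiring R] [Ring A] [Algebra R A]

def qCommutator (q : R) (F G : A) : A := q • (F * G) - G * F

theorem qCommutator_smul_left (q c : R) (F G : A) :
    qCommutator q (c • F) G = c • qCommutator q F G := by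
  rw [qCommutator, qCommutator, smul_mul_assoc, mul_smul_comm, smul_comm, smul_sub]

theorem mul_mul_eq_smul_of_mul_eq_smul {a b : R} {K F G : A}
    (hF : K * F = a • (F * K)) (hG : K * G = b • (G * K)) :
    K * (F * G) = (a * b) • (F * G * K) := by
  rw [← mul_assoc, hF, smul_mul_assoc, mul_assoc, hG, mul_smul_comm, smul_smul, mul_assoc]

theorem mul_qCommutator_eq_smul {q a b : R} {K F G : A}
    (hF : K * F = a • (F * K)) (hG : K * G = b • (G * K)) :
    K * qCommutator q F G = (a * b) • (qCommutator q F G * K) := by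
  rw [qCommutator, mul_sub, mul_smul_comm, mul_mul_eq_smul_of_mul_eq_smul hF hG,
    mul_mul_eq_smul_of_mul_eq_smul hG hF, sub_mul, smul_mul_assoc, smul_sub, smul_comm,
    mul_comm b]

theorem mul_eq_smul_of_mul_eq_smul_of_inverse {a : R} {K K' X : A}
    (hKK' : K * K' = 1) (hK'K : K' * K = 1) (h : K * X = a • (X * K)) :
    X * K' = a • (K' * X) := by
  calc X * K' = K' * (K * X) * K' := by rw [← mul_assoc, hK'K, one_mul]
    _ = a • (K' * X * (K * K')) := by rw [h, mul_smul_comm, smul_mul_assoc]; simp only [mul_assoc]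
    _ = a • (K' * X) := by rw [hKK', mul_one]

theorem lie_qCommutator_of_commute (q : R) {E F G : A} (hEG : Commute E G) :
    ⁅E, qCommutator q F G⁆ = qCommutator q ⁅E, F⁆ G := by
  simp only [qCommutator, Ring.lie_def, mul_sub, sub_mul, mul_smul_comm, smul_mul_assoc,
    smul_sub, ← mul_assoc, hEG.eq]
  simp only [mul_assoc, hEG.eq]
  abel

theorem qCommutator_sub_of_mul_eq_smul {𝕜 : Type*} [Field 𝕜] [Algebra 𝕜 A] {q : 𝕜} (hq : q ≠ 0)
    {K K' G : A} (hKK' : K * K' = 1) (hK'K : K' * K = 1) (hKG : K * G = q • (G * K)) :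
    qCommutator q (K - K') G = (q - q⁻¹) • (K * G) := by
  have hGK : G * K = q⁻¹ • (K * G) := by
    rw [hKG, smul_smul, inv_mul_cancel₀ hq, one_smul]
  rw [qCommutator, mul_sub, sub_mul, hGK, mul_eq_smul_of_mul_eq_smul_of_inverse hKK' hK'K hKG,
    smul_sub, sub_smul]
  abel

end QCommutator

theorem stmt13 (A : Type*) [Ring A] [Algebra ℂ A] (q : ℂ) (hq0 : q ≠ 0) (hq1 : q ^ 2 ≠ 1)
    (E F₁ F₂ K K' : A)
    (hKK' : K * K' = 1) (hK'K : K' * K = 1)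
    (hKF₁ : K * F₁ = (q ^ (-2 : ℤ)) • (F₁ * K))
    (hKF₂ : K * F₂ = q • (F₂ * K))
    (hEF₁ : E * F₁ - F₁ * E = (q - q⁻¹)⁻¹ • (K - K'))
    (hEF₂ : E * F₂ = F₂ * E) :
    K' * E * (q • (F₁ * F₂) - F₂ * F₁)
      - q • ((q • (F₁ * F₂) - F₂ * F₁) * (K' * E)) = F₂ := by
  have hqq : q - q⁻¹ ≠ 0 := by
    have : q - q⁻¹ = q⁻¹ * (q ^ 2 - 1) := by field_simp
    exact this ▸ mul_ne_zero (inv_ne_zero hq0) (sub_ne_zero.2 hq1)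
  have hKX : K * qCommutator q F₁ F₂ = q⁻¹ • (qCommutator q F₁ F₂ * K) := by
    rw [mul_qCommutator_eq_smul hKF₁ hKF₂, ← zpow_add_one₀ hq0]
    norm_num
  have hK'X : K' * qCommutator q F₁ F₂ = q • (qCommutator q F₁ F₂ * K') := by
    rw [mul_eq_smul_of_mul_eq_smul_of_inverse hKK' hK'K hKX, smul_smul, mul_inv_cancel₀ hq0,
      one_smul]
  have hEX : ⁅E, qCommutator q F₁ F₂⁆ = K * F₂ := by
    rw [lie_qCommutator_of_commute q hEF₂, Ring.lie_def, hEF₁, qCommutator_smul_left,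
      qCommutator_sub_of_mul_eq_smul hq0 hKK' hK'K hKF₂, smul_smul, inv_mul_cancel₀ hqq, one_smul]
  change K' * E * qCommutator q F₁ F₂ - q • (qCommutator q F₁ F₂ * (K' * E)) = F₂
  set X := qCommutator q F₁ F₂
  calc K' * E * X - q • (X * (K' * E))
      = K' * (E * X - X * E) + (K' * X - q • (X * K')) * E := by
        simp only [mul_sub, sub_mul, smul_mul_assoc, mul_assoc]; abel
    _ = F₂ := by rw [← Ring.lie_def, hEX, hK'X, sub_self, zero_mul, add_zero, ← mul_assoc, hK'K,
        one_mul]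
end

section
/- Let q ∈ ℂ be nonzero. Let V be the ℂ-vector space with basis (v_{a,b})_{a,b ∈ ℕ}, and define ℂ-linear operators e₁ and e₂ on V by e₁·v_{a,b} = v_{a+1,b} and e₂·v_{a,b} = −q^{−a}·(a)_q·v_{a−1,b+1} (so in particular e₂·v_{0,b} = 0 since (0)_q = 0). Then e₁ and e₂ satisfy both quantum Serre relations: e₁²e₂ − (q + q⁻¹)e₁e₂e₁ + e₂e₁² = 0 and e₂²e₁ − (q + q⁻¹)e₂e₁e₂ + e₁e₂² = 0 as operators on V. -/
noncomputable section

/-- The ℂ-vector space with basis `(v_{a,b})_{a,b ∈ ℕ}`, realized as the free ℂ-module on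
`ℕ × ℕ`. -/
abbrev V : Type := (ℕ × ℕ) →₀ ℂ

/-- The basis vector `v_{a,b}`. -/
def v (a b : ℕ) : V := Finsupp.single (a, b) 1

/-- The q-integer `(a)_q = Σ_{s=0}^{a−1} q^{2s}`. -/
def qInt (q : ℂ) (a : ℕ) : ℂ := ∑ s ∈ Finset.range a, q ^ (2 * s)

/-!
Write `e₂ v_{a,b} = -[a] v_{a-1,b+1}` with the balanced quantum integer `[a] = q^{-a} (a)_q`.
Both Serre operators send `v_{a,b}` to a multiple of a single basis vector, and the coefficients
are `-([a] - (q + q⁻¹)[a+1] + [a+2])` and `[a] ([a-1] - (q + q⁻¹)[a] + [a+1])`. Both vanish by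
the three-term recurrence `[a+2] = (q + q⁻¹)[a+1] - [a]` of the balanced quantum integers
(with `[0] = 0` absorbing the boundary cases).
-/

/-- The balanced quantum integer `[a]`, equal to `(q^a - q^{-a}) / (q - q⁻¹)` when `q² ≠ 1`. -/
def qNum (q : ℂ) (a : ℕ) : ℂ := (q ^ a)⁻¹ * qInt q a

@[simp]
lemma qNum_zero (q : ℂ) : qNum q 0 = 0 := by
  simp [qNum, qInt]

lemma qNum_add_two {q : ℂ} (hq : q ≠ 0) (a : ℕ) :
    qNum q (a + 2) = (q + q⁻¹) * qNum q (a + 1) - qNum q a := by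
  simp only [qNum, qInt, Finset.sum_range_succ]
  field_simp
  ring

lemma V.ext_v {f g : V →ₗ[ℂ] V} (h : ∀ a b, f (v a b) = g (v a b)) : f = g :=
  Finsupp.basisSingleOne.ext fun ⟨a, b⟩ => h a b

section SerreOperators

variable {q : ℂ} {e₁ e₂ : V →ₗ[ℂ] V}
  (he₁ : ∀ a b : ℕ, e₁ (v a b) = v (a + 1) b)
  (he₂ : ∀ a b : ℕ, e₂ (v a b) = (-((q ^ a)⁻¹ * qInt q a)) • v (a - 1) (b + 1))

include he₂ in
lemma e₂_apply_v (a b : ℕ) : e₂ (v a b) = (-qNum q a) • v (a - 1) (b + 1) :=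
  he₂ a b

include he₁ he₂

lemma serre₁_apply_v (a b : ℕ) :
    (e₁ ∘ₗ e₁ ∘ₗ e₂ - (q + q⁻¹) • (e₁ ∘ₗ e₂ ∘ₗ e₁) + e₂ ∘ₗ e₁ ∘ₗ e₁) (v a b) =
      (-(qNum q a - (q + q⁻¹) * qNum q (a + 1) + qNum q (a + 2))) • v (a + 1) (b + 1) := by
  rcases a with _ | a <;>
    simp only [LinearMap.add_apply, LinearMap.sub_apply, LinearMap.smul_apply,
      LinearMap.comp_apply, he₁, e₂_apply_v he₂, map_smul, qNum_zero, neg_zero, zero_smul,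
      map_zero, Nat.add_sub_cancel, zero_tsub] <;>
    module

lemma serre₂_apply_v (a b : ℕ) :
    (e₂ ∘ₗ e₂ ∘ₗ e₁ - (q + q⁻¹) • (e₂ ∘ₗ e₁ ∘ₗ e₂) + e₁ ∘ₗ e₂ ∘ₗ e₂) (v a b) =
      (qNum q a * (qNum q (a - 1) - (q + q⁻¹) * qNum q a + qNum q (a + 1))) •
        v (a - 1) (b + 2) := by
  rcases a with _ | _ | a <;>
    simp only [LinearMap.add_apply, LinearMap.sub_apply, LinearMap.smul_apply,
      LinearMap.comp_apply, he₁, e₂_apply_v he₂, map_smul, qNum_zero, neg_zero, zero_smul,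
      map_zero, smul_zero, Nat.add_sub_cancel, zero_tsub] <;>
    module

end SerreOperators

theorem stmt16 (q : ℂ) (hq : q ≠ 0) (e₁ e₂ : V →ₗ[ℂ] V)
    (he₁ : ∀ a b : ℕ, e₁ (v a b) = v (a + 1) b)
    (he₂ : ∀ a b : ℕ, e₂ (v a b) = (-((q ^ a)⁻¹ * qInt q a)) • v (a - 1) (b + 1)) :
    e₁ ∘ₗ e₁ ∘ₗ e₂ - (q + q⁻¹) • (e₁ ∘ₗ e₂ ∘ₗ e₁) + e₂ ∘ₗ e₁ ∘ₗ e₁ = 0 ∧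
      e₂ ∘ₗ e₂ ∘ₗ e₁ - (q + q⁻¹) • (e₂ ∘ₗ e₁ ∘ₗ e₂) + e₁ ∘ₗ e₂ ∘ₗ e₂ = 0 := by
  constructor
  · refine V.ext_v fun a b => ?_
    rw [serre₁_apply_v he₁ he₂, qNum_add_two hq]
    simp
  · refine V.ext_v fun a b => ?_
    rw [serre₂_apply_v he₁ he₂]
    rcases a with _ | a
    · simp
    · rw [qNum_add_two hq]
      simp

end
end

section
/- Let q ∈ ℂ with q ≠ 0 and q² ≠ 1. Let V be the ℂ-vector space with basis (v_{a,b})_{a,b ∈ ℕ}, and define ℂ-linear operators e₀ and e₂ on V by e₀·v_{a,b} = −q^{−a−2(b−1)}·((b)_q/(q − q⁻¹))·v_{a,b−1} (so e₀·v_{a,0} = 0) and e₂·v_{a,b} = −q^{−a}·(a)_q·v_{a−1,b+1} (so e₂·v_{0,b} = 0). Then e₀ and e₂ satisfy the quantum Serre relation e₀²e₂ − (q + q⁻¹)e₀e₂e₀ + e₂e₀² = 0 as operators on V. -/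
noncomputable section

/-!
Both operators move a basis vector to a multiple of a basis vector, so the Serre combination
sends `v_{a,b}` to a multiple of `v_{a-1,b-1}`. Up to a common factor, that multiple is
`(b+2)_q - (1 + q²)(b+1)_q + q²(b)_q`, which vanishes by `(n+1)_q = 1 + q²(n)_q`.
-/

@[simp]
theorem qInt_zero (q : ℂ) : qInt q 0 = 0 := by
  simp [qInt]

theorem qInt_succ (q : ℂ) (n : ℕ) : qInt q (n + 1) = 1 + q ^ 2 * qInt q n := by
  simp only [qInt, Finset.sum_range_succ', Finset.mul_sum, ← pow_add]
  ring_nf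

theorem qInt_add_two (q : ℂ) (n : ℕ) :
    qInt q (n + 2) - (q ^ 2 + 1) * qInt q (n + 1) + q ^ 2 * qInt q n = 0 := by
  linear_combination qInt_succ q (n + 1) - qInt_succ q n

theorem serre_apply_v (t : ℂ) {α : ℕ → ℕ → ℂ} {β : ℕ → ℂ} {e₀ e₂ : V →ₗ[ℂ] V}
    (he₀ : ∀ a b, e₀ (v a b) = α a b • v a (b - 1))
    (he₂ : ∀ a b, e₂ (v a b) = β a • v (a - 1) (b + 1)) (hα : ∀ a, α a 0 = 0) (a b : ℕ) :
    (e₀ ∘ₗ e₀ ∘ₗ e₂ - t • (e₀ ∘ₗ e₂ ∘ₗ e₀) + e₂ ∘ₗ e₀ ∘ₗ e₀) (v a b) =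
      (β a * (α (a - 1) (b + 1) * α (a - 1) b - t * α a b * α (a - 1) b
        + α a b * α a (b - 1))) • v (a - 1) (b - 1) := by
  rcases b with _ | _ | b
  · simp [he₀, he₂, hα]
  all_goals
    simp only [LinearMap.add_apply, LinearMap.sub_apply, LinearMap.smul_apply,
      LinearMap.comp_apply, he₀, he₂, map_smul, smul_smul, hα, zero_smul, smul_zero, map_zero]
    simp only [Nat.add_sub_cancel, Nat.sub_self]
    module

def e₀Coeff (q c : ℂ) (a b : ℕ) : ℂ := c * q ^ (-(a : ℤ) - 2 * ((b : ℤ) - 1)) * qInt q b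

theorem e₀Coeff_serre {q : ℂ} (hq : q ≠ 0) (c : ℂ) (a b : ℕ) :
    e₀Coeff q c a (b + 2) * e₀Coeff q c a (b + 1)
      - (q + q⁻¹) * e₀Coeff q c (a + 1) (b + 1) * e₀Coeff q c a (b + 1)
      + e₀Coeff q c (a + 1) (b + 1) * e₀Coeff q c (a + 1) b = 0 := by
  simp only [e₀Coeff]
  push_cast
  simp only [zpow_sub₀ hq, zpow_add₀ hq, zpow_neg, mul_sub, mul_add, zpow_natCast, zpow_one,
    zpow_mul]
  field_simp
  linear_combination c ^ 2 * qInt q (b + 1) * qInt_add_two q b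

theorem stmt18_general (q : ℂ) (hq0 : q ≠ 0) (e₀ e₂ : V →ₗ[ℂ] V)
    (he₀ : ∀ a b : ℕ, e₀ (v a b) =
      (-(q ^ (-(a : ℤ) - 2 * ((b : ℤ) - 1)) * (qInt q b / (q - q⁻¹)))) • v a (b - 1))
    (he₂ : ∀ a b : ℕ, e₂ (v a b) = (-((q ^ a)⁻¹ * qInt q a)) • v (a - 1) (b + 1)) :
    e₀ ∘ₗ e₀ ∘ₗ e₂ - (q + q⁻¹) • (e₀ ∘ₗ e₂ ∘ₗ e₀) + e₂ ∘ₗ e₀ ∘ₗ e₀ = 0 := by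
  have he₀' (a b : ℕ) : e₀ (v a b) = e₀Coeff q (-(q - q⁻¹)⁻¹) a b • v a (b - 1) := by
    rw [he₀, e₀Coeff]
    congr 1
    ring
  refine Finsupp.basisSingleOne.ext fun ⟨a, b⟩ =>
    (serre_apply_v _ he₀' he₂ (by simp [e₀Coeff]) a b).trans ?_
  rw [LinearMap.zero_apply]
  rcases a with _ | a
  · simp
  rcases b with _ | b
  · simp [e₀Coeff]
  exact smul_eq_zero_of_left (mul_eq_zero_of_right _ (e₀Coeff_serre hq0 _ a b)) _

theorem stmt18 (q : ℂ) (hq0 : q ≠ 0) (hq1 : q ^ 2 ≠ 1) (e₀ e₂ : V →ₗ[ℂ] V)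
    (he₀ : ∀ a b : ℕ, e₀ (v a b) =
      (-(q ^ (-(a : ℤ) - 2 * ((b : ℤ) - 1)) * (qInt q b / (q - q⁻¹)))) • v a (b - 1))
    (he₂ : ∀ a b : ℕ, e₂ (v a b) = (-((q ^ a)⁻¹ * qInt q a)) • v (a - 1) (b + 1)) :
    e₀ ∘ₗ e₀ ∘ₗ e₂ - (q + q⁻¹) • (e₀ ∘ₗ e₂ ∘ₗ e₀) + e₂ ∘ₗ e₀ ∘ₗ e₀ = 0 :=
  stmt18_general q hq0 e₀ e₂ he₀ he₂

end
end
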